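/- The pointed untimed two-agent models (M, q0q0) and (M', q0'q0'), where both agents of M are copies of the template a (states q0, q1, q2, q3 with transitions q0 →(α,β1) q1, q0 →(α,β2) q3, q1 →(α2,β) q2, q3 →(α2,β) q2, self-loops (α1,β) on q1 and q3 and (α,β) on q2, and proposition p holding only at q2) and both agents of M' are copies of the template a' (states q0', q1', q2' with transitions q0' →(α,β1) q1', q0' →(α,β2) q1', q1' →(α2,β) q2', self-loop (α1,β) on q1' and (α,β) on q2', with p only at q2'), are in alternating bisimulation, and therefore satisfy exactly the same formulas of ATL[ir]. -/
import Mathlib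


/-- Actions: `a`, `a1`, `a2` stand for α, α₁, α₂ (agent 1) and
`b`, `b1`, `b2` for β, β₁, β₂ (agent 2). -/
inductive Ac | a | a1 | a2 | b | b1 | b2
deriving DecidableEq

/-- States of the model `M` (both agents are copies of the agent template `a`;
since the agents have perfect information and move along the diagonal, global
states `q0q0`, `q1q1`, `q2q2`, `q3q3` are identified with the template states). -/
inductive StM | q0 | q1 | q2 | q3
deriving DecidableEq

/-- States of the model `M'` (both agents are copies of the template `a'`). -/
inductive StM' | q0 | q1 | q2
deriving DecidableEq

/-- An untimed two-agent concurrent model: protocols, a transition relation over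
joint actions, and the valuation of the single proposition `p`. -/
structure CGS where
  State : Type
  proto : Fin 2 → State → Set Ac
  trans : State → (Fin 2 → Ac) → State → Prop
  labelP : State → Prop

/-- Protocols in `M`: at `q0` agent 1 may play α and agent 2 may play β₁ or β₂;
at `q1`, `q3` agent 1 may play α₁ or α₂ and agent 2 plays β; at `q2` agent 1 plays
α and agent 2 plays β. -/
def protoM (i : Fin 2) (s : StM) : Set Ac :=
  if i = 0 then
    match s with
    | .q0 => {Ac.a}
    | .q1 => {Ac.a1, Ac.a2}
    | .q2 => {Ac.a}
    | .q3 => {Ac.a1, Ac.a2}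
  else
    match s with
    | .q0 => {Ac.b1, Ac.b2}
    | _ => {Ac.b}

/-- Transitions of `M`: q0 →(α,β1) q1, q0 →(α,β2) q3, q1 →(α2,β) q2, q3 →(α2,β) q2,
self-loops (α1,β) on q1 and q3, and (α,β) on q2. -/
def transM (s : StM) (c : Fin 2 → Ac) (s' : StM) : Prop :=
  (s = .q0 ∧ c 0 = Ac.a ∧ c 1 = Ac.b1 ∧ s' = .q1) ∨
  (s = .q0 ∧ c 0 = Ac.a ∧ c 1 = Ac.b2 ∧ s' = .q3) ∨
  (s = .q1 ∧ c 0 = Ac.a2 ∧ c 1 = Ac.b ∧ s' = .q2) ∨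
  (s = .q3 ∧ c 0 = Ac.a2 ∧ c 1 = Ac.b ∧ s' = .q2) ∨
  (s = .q1 ∧ c 0 = Ac.a1 ∧ c 1 = Ac.b ∧ s' = .q1) ∨
  (s = .q3 ∧ c 0 = Ac.a1 ∧ c 1 = Ac.b ∧ s' = .q3) ∨
  (s = .q2 ∧ c 0 = Ac.a ∧ c 1 = Ac.b ∧ s' = .q2)

/-- The model `M`: proposition `p` holds only at `q2`. -/
def Mcgs : CGS := ⟨StM, protoM, transM, fun s => s = .q2⟩

/-- Protocols in `M'`. -/
def protoM' (i : Fin 2) (s : StM') : Set Ac :=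
  if i = 0 then
    match s with
    | .q0 => {Ac.a}
    | .q1 => {Ac.a1, Ac.a2}
    | .q2 => {Ac.a}
  else
    match s with
    | .q0 => {Ac.b1, Ac.b2}
    | _ => {Ac.b}

/-- Transitions of `M'`: q0' →(α,β1) q1', q0' →(α,β2) q1', q1' →(α2,β) q2',
self-loop (α1,β) on q1' and (α,β) on q2'. -/
def transM' (s : StM') (c : Fin 2 → Ac) (s' : StM') : Prop :=
  (s = .q0 ∧ c 0 = Ac.a ∧ c 1 = Ac.b1 ∧ s' = .q1) ∨
  (s = .q0 ∧ c 0 = Ac.a ∧ c 1 = Ac.b2 ∧ s' = .q1) ∨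
  (s = .q1 ∧ c 0 = Ac.a2 ∧ c 1 = Ac.b ∧ s' = .q2) ∨
  (s = .q1 ∧ c 0 = Ac.a1 ∧ c 1 = Ac.b ∧ s' = .q1) ∨
  (s = .q2 ∧ c 0 = Ac.a ∧ c 1 = Ac.b ∧ s' = .q2)

/-- The model `M'`: proposition `p` holds only at `q2'`. -/
def M'cgs : CGS := ⟨StM', protoM', transM', fun s => s = .q2⟩

/-- A protocol-compliant joint action at state `s`. -/
def jointOK (G : CGS) (s : G.State) (c : Fin 2 → Ac) : Prop :=
  ∀ i, c i ∈ G.proto i s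

/-- One direction of alternating simulation between related states: every move of
any coalition `A` at `s` can be matched by a move of `A` at `s'` such that every
compliant completion at `s'` is matched by a compliant completion at `s` with
related successors. -/
def simStep (G G' : CGS) (R : G.State → G'.State → Prop)
    (s : G.State) (s' : G'.State) : Prop :=
  ∀ A : Set (Fin 2), ∀ c : Fin 2 → Ac, (∀ i ∈ A, c i ∈ G.proto i s) →
    ∃ c' : Fin 2 → Ac, (∀ i ∈ A, c' i ∈ G'.proto i s') ∧
      ∀ d' : Fin 2 → Ac, jointOK G' s' d' → (∀ i ∈ A, d' i = c' i) →
        ∀ t' : G'.State, G'.trans s' d' t' →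
          ∃ d : Fin 2 → Ac, jointOK G s d ∧ (∀ i ∈ A, d i = c i) ∧
            ∃ t : G.State, G.trans s d t ∧ R t t'

/-- `R` is an alternating bisimulation between `G` and `G'`: related states agree on
the proposition `p` and simulate each other's coalition moves. -/
def AltBisim (G G' : CGS) (R : G.State → G'.State → Prop) : Prop :=
  ∀ s s', R s s' →
    (G.labelP s ↔ G'.labelP s') ∧
    simStep G G' R s s' ∧
    simStep G' G (fun u v => R v u) s' s

/-- The bisimulation relation: q0~q0', q1~q1', q3~q1', q2~q2'. -/
def BisimRel (s : StM) (s' : StM') : Prop :=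
  (s = .q0 ∧ s' = .q0) ∨ (s = .q1 ∧ s' = .q1) ∨
  (s = .q3 ∧ s' = .q1) ∨ (s = .q2 ∧ s' = .q2)

lemma protoEq {s : StM} {s' : StM'} (h : BisimRel s s') (i : Fin 2) :
    protoM i s = protoM' i s' := by
  fin_cases i <;>
    rcases h with ⟨rfl, rfl⟩ | ⟨rfl, rfl⟩ | ⟨rfl, rfl⟩ | ⟨rfl, rfl⟩ <;> rfl

lemma altBisimRel : AltBisim Mcgs M'cgs BisimRel := by
  intro s s' h
  refine ⟨?_, ?_, ?_⟩
  · rcases h with ⟨rfl, rfl⟩ | ⟨rfl, rfl⟩ | ⟨rfl, rfl⟩ | ⟨rfl, rfl⟩ <;>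
      simp [Mcgs, M'cgs]
  · -- forward simulation
    intro A c hc
    refine ⟨c, fun i hi => show c i ∈ protoM' i s' by
      rw [← protoEq h i]; exact hc i hi, ?_⟩
    intro d' hd' hag t' ht'
    refine ⟨d', fun i => show d' i ∈ protoM i s by
      rw [protoEq h i]; exact hd' i, hag, ?_⟩
    rcases h with ⟨rfl, rfl⟩ | ⟨rfl, rfl⟩ | ⟨rfl, rfl⟩ | ⟨rfl, rfl⟩ <;>
      rcases ht' with ⟨h1, h2, h3, rfl⟩ | ⟨h1, h2, h3, rfl⟩ | ⟨h1, h2, h3, rfl⟩ |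
        ⟨h1, h2, h3, rfl⟩ | ⟨h1, h2, h3, rfl⟩ <;>
      cases h1
    · exact ⟨.q1, Or.inl ⟨rfl, h2, h3, rfl⟩, Or.inr (Or.inl ⟨rfl, rfl⟩)⟩
    · exact ⟨.q3, Or.inr (Or.inl ⟨rfl, h2, h3, rfl⟩), Or.inr (Or.inr (Or.inl ⟨rfl, rfl⟩))⟩
    · exact ⟨.q2, Or.inr (Or.inr (Or.inl ⟨rfl, h2, h3, rfl⟩)),
        Or.inr (Or.inr (Or.inr ⟨rfl, rfl⟩))⟩
    · exact ⟨.q1, Or.inr (Or.inr (Or.inr (Or.inr (Or.inl ⟨rfl, h2, h3, rfl⟩)))),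
        Or.inr (Or.inl ⟨rfl, rfl⟩)⟩
    · exact ⟨.q2, Or.inr (Or.inr (Or.inr (Or.inl ⟨rfl, h2, h3, rfl⟩))),
        Or.inr (Or.inr (Or.inr ⟨rfl, rfl⟩))⟩
    · exact ⟨.q3, Or.inr (Or.inr (Or.inr (Or.inr (Or.inr (Or.inl ⟨rfl, h2, h3, rfl⟩))))),
        Or.inr (Or.inr (Or.inl ⟨rfl, rfl⟩))⟩
    · exact ⟨.q2, Or.inr (Or.inr (Or.inr (Or.inr (Or.inr (Or.inr ⟨rfl, h2, h3, rfl⟩))))),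
        Or.inr (Or.inr (Or.inr ⟨rfl, rfl⟩))⟩
  · -- backward simulation
    intro A c hc
    refine ⟨c, fun i hi => show c i ∈ protoM i s by
      rw [protoEq h i]; exact hc i hi, ?_⟩
    intro d' hd' hag t' ht'
    refine ⟨d', fun i => show d' i ∈ protoM' i s' by
      rw [← protoEq h i]; exact hd' i, hag, ?_⟩
    rcases h with ⟨rfl, rfl⟩ | ⟨rfl, rfl⟩ | ⟨rfl, rfl⟩ | ⟨rfl, rfl⟩ <;>
      rcases ht' with ⟨h1, h2, h3, rfl⟩ | ⟨h1, h2, h3, rfl⟩ | ⟨h1, h2, h3, rfl⟩ |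
        ⟨h1, h2, h3, rfl⟩ | ⟨h1, h2, h3, rfl⟩ | ⟨h1, h2, h3, rfl⟩ | ⟨h1, h2, h3, rfl⟩ <;>
      cases h1
    · exact ⟨.q1, Or.inl ⟨rfl, h2, h3, rfl⟩, Or.inr (Or.inl ⟨rfl, rfl⟩)⟩
    · exact ⟨.q1, Or.inr (Or.inl ⟨rfl, h2, h3, rfl⟩), Or.inr (Or.inr (Or.inl ⟨rfl, rfl⟩))⟩
    · exact ⟨.q2, Or.inr (Or.inr (Or.inl ⟨rfl, h2, h3, rfl⟩)),
        Or.inr (Or.inr (Or.inr ⟨rfl, rfl⟩))⟩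
    · exact ⟨.q1, Or.inr (Or.inr (Or.inr (Or.inl ⟨rfl, h2, h3, rfl⟩))),
        Or.inr (Or.inl ⟨rfl, rfl⟩)⟩
    · exact ⟨.q2, Or.inr (Or.inr (Or.inl ⟨rfl, h2, h3, rfl⟩)),
        Or.inr (Or.inr (Or.inr ⟨rfl, rfl⟩))⟩
    · exact ⟨.q1, Or.inr (Or.inr (Or.inr (Or.inl ⟨rfl, h2, h3, rfl⟩))),
        Or.inr (Or.inr (Or.inl ⟨rfl, rfl⟩))⟩
    · exact ⟨.q2, Or.inr (Or.inr (Or.inr (Or.inr ⟨rfl, h2, h3, rfl⟩))),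
        Or.inr (Or.inr (Or.inr ⟨rfl, rfl⟩))⟩

/-- **The pointed models `(M, q0q0)` and `(M', q0'q0')` are in alternating
bisimulation, and therefore satisfy exactly the same formulas of ATL[ir].**
ATL[ir] is kept abstract: `ATLirFormula` is its set of formulas and `SatATLir` its
satisfaction relation over pointed two-agent models; `hPreserve` is the known fact
that alternating bisimulation preserves satisfaction of ATL formulas. -/
theorem witness_models_alt_bisimilar_and_ATLir_equivalent
    (ATLirFormula : Type)
    (SatATLir : (G : CGS) → G.State → ATLirFormula → Prop)
    -- alternating bisimulation preserves ATL[ir] satisfaction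
    (hPreserve : ∀ (G G' : CGS) (R : G.State → G'.State → Prop),
      AltBisim G G' R → ∀ s s', R s s' →
        ∀ φ : ATLirFormula, SatATLir G s φ ↔ SatATLir G' s' φ) :
    (∃ R : StM → StM' → Prop, AltBisim Mcgs M'cgs R ∧ R StM.q0 StM'.q0) ∧
    (∀ φ : ATLirFormula, SatATLir Mcgs StM.q0 φ ↔ SatATLir M'cgs StM'.q0 φ) := by
  refine ⟨⟨BisimRel, altBisimRel, Or.inl ⟨rfl, rfl⟩⟩, ?_⟩
  exact hPreserve _ _ _ altBisimRel _ _ (Or.inl ⟨rfl, rfl⟩)
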